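/- arXiv:2605.00541 — 3 statements merged into one kernel-verified Lean document; each statement's English description precedes it below -/
import Mathlib

section
/- Let P be the intersection of finitely many closed half-spaces in R^{n+1} whose boundary hyperplanes all pass through the origin, intersected with the unit sphere S^n. Then P is contained in an open hemisphere if and only if the intersection of all the boundary hyperplanes is the zero subspace. -/
open scoped RealInnerProductSpace

/-- A spherical polytope `P = Sⁿ ∩ H₁⁺ ∩ ⋯ ∩ H_m⁺` (half-spaces through the origin) is
contained in an open hemisphere if and only if the intersection of the boundary hyperplanes
is the zero subspace. -/
theorem stmt_5 (n m : ℕ) (w : Fin m → EuclideanSpace ℝ (Fin (n + 1)))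
    (hw : ∀ i, w i ≠ 0) (P : Set (EuclideanSpace ℝ (Fin (n + 1))))
    (hP : P = {x | ‖x‖ = 1 ∧ ∀ i, 0 ≤ ⟪x, w i⟫}) :
    (∃ u : EuclideanSpace ℝ (Fin (n + 1)), ∀ x ∈ P, 0 < ⟪u, x⟫) ↔
      {x : EuclideanSpace ℝ (Fin (n + 1)) | ∀ i, ⟪x, w i⟫ = 0} = {0} := by
  subst hP
  constructor
  · rintro ⟨u, hu⟩
    ext v
    simp only [Set.mem_setOf_eq, Set.mem_singleton_iff]
    constructor
    · intro hv
      by_contra hv0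
      have hn : ‖v‖ ≠ 0 := norm_ne_zero_iff.mpr hv0
      set x : EuclideanSpace ℝ (Fin (n + 1)) := ‖v‖⁻¹ • v with hx
      have hxn : ‖x‖ = 1 := by
        rw [hx, norm_smul, norm_inv, norm_norm, inv_mul_cancel₀ hn]
      have hxi : ∀ i, ⟪x, w i⟫ = 0 := by
        intro i
        rw [hx, inner_smul_left]
        simp [hv i]
      have h1 : 0 < ⟪u, x⟫ := hu x ⟨hxn, fun i => (hxi i).ge⟩
      have h2 : 0 < ⟪u, -x⟫ := by
        refine hu (-x) ⟨by simpa using hxn, fun i => ?_⟩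
        rw [inner_neg_left, hxi i, neg_zero]
      rw [inner_neg_right] at h2
      linarith
    · rintro rfl i
      simp
  · intro h
    refine ⟨∑ i, w i, fun x hx => ?_⟩
    obtain ⟨hxn, hxi⟩ := hx
    have hsum : ⟪∑ i, w i, x⟫ = ∑ i, ⟪x, w i⟫ := by
      rw [sum_inner]
      exact Finset.sum_congr rfl fun i _ => real_inner_comm _ _
    rw [hsum]
    rcases (Finset.sum_nonneg fun i _ => hxi i).lt_or_eq with hlt | heq
    · exact hlt
    · exfalso
      have : ∀ i ∈ Finset.univ, ⟪x, w i⟫ = 0 :=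
        (Finset.sum_eq_zero_iff_of_nonneg fun i _ => hxi i).mp heq.symm
      have hx0 : x ∈ ({0} : Set (EuclideanSpace ℝ (Fin (n + 1)))) := by
        rw [← h]; exact fun i => this i (Finset.mem_univ i)
      simp only [Set.mem_singleton_iff] at hx0
      rw [hx0] at hxn
      simp at hxn
end

section
/- Let L be a collection of subspaces of Euclidean space E^n (n ≥ 2) generated by hyperplanes, and suppose there exist hyperplanes L_1, ..., L_n ∈ L whose normal vectors form a basis of R^n (equivalently, L_1 ∩ ... ∩ L_n is a single point). Let U ∈ L be any hyperplane with normal vector w. Then there exists an index i such that the n-1 hyperplanes {L_j ∩ U : j ≠ i} inside U have a single common point; i.e., ∩_{j≠i} L_j ∩ U is a point. -/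
open scoped RealInnerProductSpace

/-! Since `w ≠ 0`, some coordinate of `w` in the basis `v` is nonzero, say the `i`-th; exchanging
`v i` for `w` then yields again a basis. A system `⟪x, u j⟫ = d j` over a basis `u` has exactly one
solution: the Riesz representative of the functional taking the values `d` on `u`. -/

theorem Module.Basis.exists_basis_update_eq {ι K M : Type*} [Fintype ι] [DecidableEq ι] [Field K]
    [AddCommGroup M] [Module K M] (b : Module.Basis ι K M) {m : M} (hm : m ≠ 0) :
    ∃ i, ∃ b' : Module.Basis ι K M, ⇑b' = Function.update b i m := by
  obtain ⟨i, hi⟩ : ∃ i, b.repr m i ≠ 0 :=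
    not_forall.mp fun h => hm (b.repr.map_eq_zero_iff.mp (Finsupp.ext h))
  have hli : LinearIndependent K (Function.update b i m) :=
    b.linearIndependent.update i m
      ⟨1, one_mem _, b.repr m, mem_nonZeroDivisors_of_ne_zero hi,
        by rw [one_smul, b.linearCombination_repr]⟩
  have : FiniteDimensional K M := b.finiteDimensional_of_finite
  exact ⟨i, basisOfLinearIndependentOfCardEqFinrank' _ hli (Module.finrank_eq_card_basis b).symm,
    coe_basisOfLinearIndependentOfCardEqFinrank' _ _ _⟩

theorem Module.Basis.exists_inner_eq_singleton {ι 𝕜 E : Type*} [Fintype ι] [RCLike 𝕜]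
    [NormedAddCommGroup E] [InnerProductSpace 𝕜 E] [FiniteDimensional 𝕜 E]
    (u : Module.Basis ι 𝕜 E) (d : ι → 𝕜) :
    ∃ p, {x : E | ∀ j, inner 𝕜 x (u j) = d j} = {p} := by
  have : CompleteSpace E := FiniteDimensional.complete 𝕜 E
  let φ : StrongDual 𝕜 E := LinearMap.toContinuousLinearMap (u.constr 𝕜 d)
  have hp : ∀ j, inner 𝕜 ((InnerProductSpace.toDual 𝕜 E).symm φ) (u j) = d j := fun j => by
    rw [InnerProductSpace.toDual_symm_apply]
    exact u.constr_basis 𝕜 d j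
  exact ⟨_, Set.eq_singleton_iff_unique_mem.mpr
    ⟨hp, fun x hx => InnerProductSpace.ext_inner_right_basis u fun j => (hx j).trans (hp j).symm⟩⟩

theorem stmt_13_general (n : ℕ)
    (v : Fin n → EuclideanSpace ℝ (Fin n)) (a : Fin n → ℝ)
    (hv : ∃ b : Module.Basis (Fin n) ℝ (EuclideanSpace ℝ (Fin n)), ⇑b = v)
    (w : EuclideanSpace ℝ (Fin n)) (hw : w ≠ 0) (b₀ : ℝ) :
    ∃ (i : Fin n) (p : EuclideanSpace ℝ (Fin n)),
      {x : EuclideanSpace ℝ (Fin n) | ⟪x, w⟫ = b₀ ∧ ∀ j, j ≠ i → ⟪x, v j⟫ = a j} = {p} := by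
  obtain ⟨b, rfl⟩ := hv
  obtain ⟨i, u, hu⟩ := b.exists_basis_update_eq hw
  obtain ⟨p, hp⟩ := u.exists_inner_eq_singleton (Function.update a i b₀)
  refine ⟨i, p, Eq.trans ?_ hp⟩
  ext x
  simp only [Set.mem_ofPred_eq, hu]
  constructor
  · rintro ⟨hxw, hxv⟩ j
    rcases eq_or_ne j i with rfl | hj
    · simpa using hxw
    · simpa [hj] using hxv j hj
  · exact fun h => ⟨by simpa using h i, fun j hj => by simpa [hj] using h j⟩

/-- If `L_1, …, L_n` are affine hyperplanes of `Eⁿ` whose normal vectors form a basis, and `U`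
is another hyperplane, then for some `i` the hyperplanes `{L_j ∩ U : j ≠ i}` of `U` intersect
in a single point. -/
theorem stmt_13 (n : ℕ) (hn : 2 ≤ n)
    (v : Fin n → EuclideanSpace ℝ (Fin n)) (a : Fin n → ℝ)
    (hv : ∃ b : Module.Basis (Fin n) ℝ (EuclideanSpace ℝ (Fin n)), ⇑b = v)
    (w : EuclideanSpace ℝ (Fin n)) (hw : w ≠ 0) (b₀ : ℝ) :
    ∃ (i : Fin n) (p : EuclideanSpace ℝ (Fin n)),
      {x : EuclideanSpace ℝ (Fin n) | ⟪x, w⟫ = b₀ ∧ ∀ j, j ≠ i → ⟪x, v j⟫ = a j} = {p} :=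
  stmt_13_general n v a hv w hw b₀
end

section
/- In Euclidean space E^1 = R, let L^0 be a nonempty set of points and let Pt be the free abelian group on closed intervals [p, p'] with p < p' both in L^0, modulo the relation [p, p''] = [p, p'] + [p', p''] whenever p < p' < p'' are in L^0. Then the map sending [p, p'] to the element [p'] - [p] of the augmentation ideal ker(ε : Z⟨L^0⟩ → Z) is an isomorphism of abelian groups. -/
/-- Generators: intervals `[p, p']` with `p < p'` both in `L0`. -/
def IntervalGen (L0 : Set ℝ) : Type :=
  {q : ↥L0 × ↥L0 // (q.1 : ℝ) < (q.2 : ℝ)}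

/-- The subgroup of relations `[p,p''] = [p,p'] + [p',p'']`. -/
def IntervalRel (L0 : Set ℝ) : AddSubgroup (FreeAbelianGroup (IntervalGen L0)) :=
  AddSubgroup.closure
    {z | ∃ (p p' p'' : ↥L0) (h1 : (p : ℝ) < (p' : ℝ)) (h2 : (p' : ℝ) < (p'' : ℝ)),
      z = FreeAbelianGroup.of (⟨(p, p''), lt_trans h1 h2⟩ : IntervalGen L0)
        - FreeAbelianGroup.of (⟨(p, p'), h1⟩ : IntervalGen L0)
        - FreeAbelianGroup.of (⟨(p', p''), h2⟩ : IntervalGen L0)}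

/-- The polytope group of `L0`-intervals in `E¹`. -/
def IntervalPt (L0 : Set ℝ) : Type :=
  FreeAbelianGroup (IntervalGen L0) ⧸ IntervalRel L0

instance (L0 : Set ℝ) : AddCommGroup (IntervalPt L0) :=
  QuotientAddGroup.Quotient.addCommGroup (IntervalRel L0)

/-- The augmentation `ℤ⟨L0⟩ → ℤ`. -/
noncomputable def aug (L0 : Set ℝ) : (↥L0 →₀ ℤ) →+ ℤ :=
  Finsupp.liftAddHom fun _ => AddMonoidHom.id ℤ

/-!
Fix a base point `p₀ ∈ L0` and let `J a b` be the signed interval from `a` to `b` (`[a, b]`,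
`-[b, a]` or `0`). The subdivision relation makes `J` a cocycle, `J a b + J b c = J a c`. The
boundary `[p, p'] ↦ [p'] - [p]` respects subdivision, and `f ↦ ∑ f q • J p₀ q` inverts it on the
augmentation ideal: the boundary of `J p₀ q` is `[q] - [p₀]`, while `J p₀ p' - J p₀ p = [p, p']`
by the cocycle identity.
-/

section

open FreeAbelianGroup Finsupp

theorem map_linearCombination_eq_sub_smul_single {α G : Type*} [AddCommGroup G]
    (Φ : G →+ (α →₀ ℤ)) (j : α → G) (p₀ : α)
    (hj : ∀ q, Φ (j q) = single q 1 - single p₀ 1) (f : α →₀ ℤ) :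
    Φ (linearCombination ℤ j f) = f - liftAddHom (fun _ => AddMonoidHom.id ℤ) f • single p₀ 1 := by
  induction f using Finsupp.induction_linear with
  | zero => simp
  | add f g hf hg => simp only [map_add, hf, hg, add_smul]; abel
  | single q n => simp [hj, smul_sub]

variable {L0 : Set ℝ}

namespace IntervalGen

-- Terms built with `mk` have type `IntervalGen L0` rather than the underlying subtype, which
-- `simp` and `rw` need in order to see through `of` and `map_sub`.
def mk (p p' : L0) (h : p < p') : IntervalGen L0 :=
  ⟨(p, p'), h⟩

noncomputable def boundary (q : IntervalGen L0) : L0 →₀ ℤ :=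
  single q.1.2 1 - single q.1.1 1

@[simp]
theorem boundary_mk {p p' : L0} (h : p < p') : (mk p p' h).boundary = single p' 1 - single p 1 :=
  rfl

end IntervalGen

namespace IntervalPt

def interval (p p' : L0) (h : p < p') : IntervalPt L0 :=
  QuotientAddGroup.mk (of (IntervalGen.mk p p' h))

theorem interval_add_interval {p p' p'' : L0} (h₁ : p < p') (h₂ : p' < p'') :
    interval p p' h₁ + interval p' p'' h₂ = interval p p'' (h₁.trans h₂) := by
  have hrel : QuotientAddGroup.mk' (IntervalRel L0) (of (IntervalGen.mk p p'' (h₁.trans h₂))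
      - of (IntervalGen.mk p p' h₁) - of (IntervalGen.mk p' p'' h₂)) = 0 :=
    (QuotientAddGroup.eq_zero_iff _).mpr (AddSubgroup.subset_closure ⟨p, p', p'', h₁, h₂, rfl⟩)
  rw [map_sub, map_sub, sub_sub, sub_eq_zero] at hrel
  exact hrel.symm

theorem intervalRel_le {H : AddSubgroup (FreeAbelianGroup (IntervalGen L0))}
    (h : ∀ (p p' p'' : L0) (h₁ : p < p') (h₂ : p' < p''),
      of (IntervalGen.mk p p'' (h₁.trans h₂)) - of (IntervalGen.mk p p' h₁)
        - of (IntervalGen.mk p' p'' h₂) ∈ H) :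
    IntervalRel L0 ≤ H :=
  (AddSubgroup.closure_le H).2 fun _ ⟨p, p', p'', h₁, h₂, hz⟩ => hz ▸ h p p' p'' h₁ h₂

theorem hom_ext {G : Type*} [AddCommGroup G] {f g : IntervalPt L0 →+ G}
    (h : ∀ p p' (hp : p < p'), f (interval p p' hp) = g (interval p p' hp)) : f = g :=
  QuotientAddGroup.addMonoidHom_ext _ <| FreeAbelianGroup.lift_ext _ _ fun ⟨(p, p'), hp⟩ =>
    h p p' hp

noncomputable def signedInterval (a b : L0) : IntervalPt L0 :=
  if h : a < b then interval a b h else if h' : b < a then -interval b a h' else 0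

theorem signedInterval_of_lt {a b : L0} (h : a < b) : signedInterval a b = interval a b h :=
  dif_pos h

theorem signedInterval_of_gt {a b : L0} (h : b < a) : signedInterval a b = -interval b a h := by
  rw [signedInterval, dif_neg h.asymm, dif_pos h]

@[simp]
theorem signedInterval_self (a : L0) : signedInterval a a = 0 := by
  simp [signedInterval]

theorem signedInterval_swap (a b : L0) : signedInterval b a = -signedInterval a b := by
  rcases lt_trichotomy a b with h | rfl | h
  · rw [signedInterval_of_gt h, signedInterval_of_lt h]
  · simp
  · rw [signedInterval_of_lt h, signedInterval_of_gt h, neg_neg]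

theorem signedInterval_add_of_lt_of_lt {a b c : L0} (hab : a < b) (hbc : b < c) :
    signedInterval a b + signedInterval b c = signedInterval a c := by
  rw [signedInterval_of_lt hab, signedInterval_of_lt hbc, signedInterval_of_lt (hab.trans hbc),
    interval_add_interval]

-- In each strict ordering of `a, b, c`, this is the subdivision relation for the sorted triple.
theorem signedInterval_add (a b c : L0) :
    signedInterval a b + signedInterval b c = signedInterval a c := by
  rcases eq_or_ne a b with rfl | hab
  · simp
  rcases eq_or_ne b c with rfl | hbc
  · simp
  rcases eq_or_ne a c with rfl | hac
  · simp [signedInterval_swap b a]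
  rcases hab.lt_or_gt with hab | hab <;> rcases hbc.lt_or_gt with hbc | hbc <;>
    rcases hac.lt_or_gt with hac | hac
  · exact signedInterval_add_of_lt_of_lt hab hbc
  · order
  · rw [← signedInterval_add_of_lt_of_lt hac hbc, signedInterval_swap b c]
    abel
  · rw [signedInterval_swap c b, ← signedInterval_add_of_lt_of_lt hac hab,
      signedInterval_swap c a]
    abel
  · rw [← signedInterval_add_of_lt_of_lt hab hac, signedInterval_swap b a]
    abel
  · rw [signedInterval_swap b a, ← signedInterval_add_of_lt_of_lt hbc hac,
      signedInterval_swap c a]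
    abel
  · order
  · rw [signedInterval_swap b a, signedInterval_swap c b, signedInterval_swap c a,
      ← signedInterval_add_of_lt_of_lt hbc hab]
    abel

noncomputable def boundary : IntervalPt L0 →+ (L0 →₀ ℤ) :=
  QuotientAddGroup.lift (IntervalRel L0)
    (FreeAbelianGroup.lift IntervalGen.boundary) <| by
      refine intervalRel_le fun p p' p'' h₁ h₂ => AddMonoidHom.mem_ker.2 ?_
      simp only [map_sub, lift_apply_of, IntervalGen.boundary_mk]
      abel

theorem boundary_interval {p p' : L0} (h : p < p') :
    boundary (interval p p' h) = single p' 1 - single p 1 :=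
  lift_apply_of _ _

theorem boundary_signedInterval (a b : L0) :
    boundary (signedInterval a b) = single b 1 - single a 1 := by
  rcases lt_trichotomy a b with h | rfl | h
  · rw [signedInterval_of_lt h, boundary_interval]
  · simp
  · rw [signedInterval_of_gt h, map_neg, boundary_interval, neg_sub]

theorem aug_comp_boundary : (aug L0).comp boundary = 0 :=
  hom_ext fun p p' h => by
    simp only [aug, AddMonoidHom.comp_apply, boundary_interval h, map_sub, liftAddHom_apply_single,
      sub_self, AddMonoidHom.zero_apply]

theorem linearCombination_signedInterval_comp_boundary (p₀ : L0) :
    (linearCombination ℤ (signedInterval p₀)).toAddMonoidHom.comp boundary = .id _ :=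
  hom_ext fun p p' h => by
    simp only [AddMonoidHom.comp_apply, boundary_interval h, LinearMap.toAddMonoidHom_coe,
      map_sub, linearCombination_single, one_smul, AddMonoidHom.id_apply]
    rw [sub_eq_iff_eq_add', ← signedInterval_of_lt h, signedInterval_add]

theorem boundary_linearCombination_signedInterval (p₀ : L0) {f : L0 →₀ ℤ} (hf : aug L0 f = 0) :
    boundary (linearCombination ℤ (signedInterval p₀) f) = f := by
  rw [map_linearCombination_eq_sub_smul_single boundary _ p₀ (boundary_signedInterval p₀)]
  change f - aug L0 f • single p₀ 1 = f
  rw [hf, zero_smul, sub_zero]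

end IntervalPt

end

/-- Base case `n = 1` of the Solomon–Tits theorem for Euclidean polytopes: the group of
`L0`-intervals, modulo subdivision, is isomorphic to the augmentation ideal of `ℤ⟨L0⟩` via
`[p, p'] ↦ [p'] - [p]`. -/
theorem stmt_17 (L0 : Set ℝ) (hL0 : L0.Nonempty) :
    ∃ φ : IntervalPt L0 ≃+ (aug L0).ker,
      ∀ (p p' : ↥L0) (h : (p : ℝ) < (p' : ℝ)),
        ((φ (QuotientAddGroup.mk
            (FreeAbelianGroup.of (⟨(p, p'), h⟩ : IntervalGen L0))) : (aug L0).ker) : ↥L0 →₀ ℤ)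
          = Finsupp.single p' 1 - Finsupp.single p 1 := by
  obtain ⟨p₀, hp₀⟩ := hL0
  let ψ := (Finsupp.linearCombination ℤ
    (IntervalPt.signedInterval (⟨p₀, hp₀⟩ : L0))).toAddMonoidHom
  refine ⟨AddMonoidHom.toAddEquiv
    (IntervalPt.boundary.codRestrict _ fun x => DFunLike.congr_fun IntervalPt.aug_comp_boundary x)
    (ψ.comp (aug L0).ker.subtype) (IntervalPt.linearCombination_signedInterval_comp_boundary _) ?_,
    fun p p' h => IntervalPt.boundary_interval h⟩
  ext ⟨f, hf⟩ : 2
  exact IntervalPt.boundary_linearCombination_signedInterval _ hf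
end
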